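/- Let (S,·) be an arbitrary semigroup, let A ⊆ S be a SCR-set in S, and let l ∈ ℕ. Then the set D = {(a₁,a₂,d) ∈ S × S × S : for every t ∈ {1,2,...,l}, a₁·d^t·a₂ ∈ A} is a SCR-set in the semigroup S × S × S (with coordinatewise multiplication), where d^t denotes the t-fold product d·d···d. -/

import Mathlib

/-!
Fix any `u ∈ S`. For a sequence `f` in `S × S × S` and `s < l`, the sequence
`n ↦ f₁(n) u (u f₃(n) u)^(s+1) u f₂(n)` lies in `S`; if `a₁ (·) a₂` sends all `k·l` of these
into `A` at time `t`, then `(a₁, u, u) f(t) (u, a₂, u)` lies in `D` for each of the `k` sequences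
`f`. The padding by `u` stands in for the identity that `S` may lack.
-/

/-- `A` is a strong combinatorially rich set (SCR-set) in the semigroup `S`. -/
def IsSCRSet {S : Type*} [Semigroup S] (A : Set S) : Prop :=
  ∀ k : ℕ, ∃ r : ℕ, ∀ F : Finset (ℕ → S), F.card ≤ k →
    ∃ a₁ a₂ : S, ∃ t ≤ r, ∀ f ∈ F, a₁ * f t * a₂ ∈ A

/-- `powSucc n d = d^(n+1)`, the `(n+1)`-fold product `d · d ⋯ d`. -/
def powSucc {S : Type*} [Semigroup S] : ℕ → S → S
  | 0, d => d
  | n + 1, d => powSucc n d * d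

namespace IsSCRSet

variable {S : Type*} [Semigroup S] {A : Set S}

theorem nonempty (hA : IsSCRSet A) : Nonempty S := by
  obtain ⟨r, hr⟩ := hA 0
  obtain ⟨u, -, -⟩ := hr ∅ (by simp)
  exact ⟨u⟩

theorem exists_forall_mem_of_card_le {ι : Type*} (hA : IsSCRSet A) (k : ℕ) :
    ∃ r : ℕ, ∀ (I : Finset ι) (f : ι → ℕ → S), I.card ≤ k →
      ∃ a₁ a₂ : S, ∃ t ≤ r, ∀ i ∈ I, a₁ * f i t * a₂ ∈ A := by
  classical
  obtain ⟨r, hr⟩ := hA k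
  refine ⟨r, fun I f hI => ?_⟩
  obtain ⟨a₁, a₂, t, ht, hmem⟩ := hr (I.image f) (Finset.card_image_le.trans hI)
  exact ⟨a₁, a₂, t, ht, fun i hi => hmem (f i) (Finset.mem_image_of_mem f hi)⟩

end IsSCRSet

section Progression

variable {S : Type*} [Semigroup S]

def paddedProgressionTerm (u : S) (x : S × S × S) (s : ℕ) : S :=
  x.1 * u * powSucc s (u * x.2.2 * u) * u * x.2.1

theorem mul_powSucc_mul_of_padded (u a₁ a₂ : S) (x : S × S × S) (s : ℕ) :
    let y := (a₁, u, u) * x * (u, a₂, u)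
    y.1 * powSucc s y.2.2 * y.2.1 = a₁ * paddedProgressionTerm u x s * a₂ := by
  simp only [paddedProgressionTerm, Prod.fst_mul, Prod.snd_mul, mul_assoc]

end Progression

/-- If `A` is a SCR-set in a semigroup `S` and `l ∈ ℕ`, then
`D = {(a₁, a₂, d) : a₁ dᵗ a₂ ∈ A for all t ∈ {1, …, l}}` is a SCR-set in `S × S × S`. -/
theorem abundance_of_long_progressions_in_SCR_strong {S : Type*} [Semigroup S] (A : Set S)
    (hA : IsSCRSet A) (l : ℕ) :
    IsSCRSet {x : S × S × S | ∀ t : ℕ, t < l → x.1 * powSucc t x.2.2 * x.2.1 ∈ A} := by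
  obtain ⟨u⟩ := hA.nonempty
  intro k
  obtain ⟨r, hr⟩ := hA.exists_forall_mem_of_card_le (ι := (ℕ → S × S × S) × ℕ) (k * l)
  refine ⟨r, fun F hF => ?_⟩
  have hcard : (F ×ˢ Finset.range l).card ≤ k * l := by
    rw [Finset.card_product, Finset.card_range]
    exact Nat.mul_le_mul_right l hF
  obtain ⟨a₁, a₂, t, ht, hmem⟩ :=
    hr (F ×ˢ Finset.range l) (fun p n => paddedProgressionTerm u (p.1 n) p.2) hcard
  refine ⟨(a₁, u, u), (u, a₂, u), t, ht, fun f hf s hs => ?_⟩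
  rw [mul_powSucc_mul_of_padded]
  exact hmem (f, s) (Finset.mem_product.2 ⟨hf, Finset.mem_range.2 hs⟩)
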